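/- An atomic condensed integral domain D is a PID if and only if D is a ∗-domain. -/
import Mathlib


/-- An integral domain is condensed if for every pair of nonzero ideals `I, J`,
the product `I*J` equals the set of products `{i*j : i ∈ I, j ∈ J}`. -/
def IsCondensed (D : Type*) [CommRing D] : Prop :=
  ∀ I J : Ideal D, I ≠ ⊥ → J ≠ ⊥ → ∀ x ∈ I * J, ∃ i ∈ I, ∃ j ∈ J, x = i * j

/-- A domain is atomic if every nonzero nonunit is a finite product of
irreducible elements. -/
def IsAtomicDomain (D : Type*) [CommRing D] : Prop :=
  ∀ x : D, x ≠ 0 → ¬ IsUnit x →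
    ∃ f : Multiset D, (∀ b ∈ f, Irreducible b) ∧ f.prod = x

/-- `D` is a `∗`-domain: for all finite families of nonzero elements
`a_1,…,a_m` and `b_1,…,b_n`, `(⋂ a_i D)(⋂ b_j D) = ⋂_{i,j} a_i b_j D`. -/
def IsStarDomain (D : Type*) [CommRing D] : Prop :=
  ∀ (m n : ℕ) (a : Fin (m + 1) → D) (b : Fin (n + 1) → D),
    (∀ i, a i ≠ 0) → (∀ j, b j ≠ 0) →
    (⨅ i, Ideal.span {a i}) * (⨅ j, Ideal.span {b j}) =
      ⨅ i, ⨅ j, Ideal.span {a i * b j}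

/-- In a domain, multiplication by a nonzero principal ideal distributes over
nonempty infima of ideals. -/
lemma span_singleton_mul_iInf {D : Type*} [CommRing D] [IsDomain D] {ι : Type*} [Nonempty ι]
    {c : D} (hc : c ≠ 0) (I : ι → Ideal D) :
    Ideal.span {c} * (⨅ i, I i) = ⨅ i, Ideal.span {c} * I i := by
  refine le_antisymm (le_iInf fun i => Ideal.mul_mono_right (iInf_le _ i)) ?_
  intro x hx
  rw [Ideal.mem_iInf] at hx
  obtain ⟨i₀⟩ := ‹Nonempty ι›
  obtain ⟨y, hy, hxy⟩ := Ideal.mem_span_singleton_mul.1 (hx i₀)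
  refine Ideal.mem_span_singleton_mul.2 ⟨y, Ideal.mem_iInf.2 fun i => ?_, hxy⟩
  obtain ⟨z, hz, hzx⟩ := Ideal.mem_span_singleton_mul.1 (hx i)
  have : z = y := mul_left_cancel₀ hc (hzx.trans hxy.symm)
  exact this ▸ hz

/-- In a condensed ∗-domain, every irreducible element is prime. -/
lemma irreducible_prime_of_star {D : Type*} [CommRing D] [IsDomain D]
    (hc : IsCondensed D) (hstar : IsStarDomain D) {p : D} (hp : Irreducible p) : Prime p := by
  refine ⟨hp.ne_zero, hp.not_isUnit, ?_⟩
  intro a b hab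
  by_contra hnd
  push_neg at hnd
  obtain ⟨hpa, hpb⟩ := hnd
  have ha0 : a ≠ 0 := fun h => hpa (h ▸ dvd_zero p)
  have hb0 : b ≠ 0 := fun h => hpb (h ▸ dvd_zero p)
  have hA : ∀ i : Fin 2, (![p, a] : Fin 2 → D) i ≠ 0 := by
    intro i; fin_cases i <;> simp [hp.ne_zero, ha0]
  have hB : ∀ j : Fin 2, (![p, b] : Fin 2 → D) j ≠ 0 := by
    intro j; fin_cases j <;> simp [hp.ne_zero, hb0]
  have hs := hstar 1 1 ![p, a] ![p, b] hA hB
  set I : Ideal D := ⨅ i, Ideal.span {(![p, a] : Fin 2 → D) i} with hIdef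
  set J : Ideal D := ⨅ j, Ideal.span {(![p, b] : Fin 2 → D) j} with hJdef
  have hI : I ≠ ⊥ := by
    rw [Submodule.ne_bot_iff]
    refine ⟨p * a, Ideal.mem_iInf.2 fun i => Ideal.mem_span_singleton.2 ?_,
      mul_ne_zero hp.ne_zero ha0⟩
    fin_cases i
    · simp only [Fin.mk_zero, Fin.mk_one, Matrix.cons_val_zero]; exact Dvd.intro a rfl
    · simp only [Fin.mk_zero, Fin.mk_one, Matrix.cons_val_one, Matrix.head_cons]; exact Dvd.intro_left p rfl
  have hJ : J ≠ ⊥ := by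
    rw [Submodule.ne_bot_iff]
    refine ⟨p * b, Ideal.mem_iInf.2 fun j => Ideal.mem_span_singleton.2 ?_,
      mul_ne_zero hp.ne_zero hb0⟩
    fin_cases j
    · simp only [Fin.mk_zero, Fin.mk_one, Matrix.cons_val_zero]; exact Dvd.intro b rfl
    · simp only [Fin.mk_zero, Fin.mk_one, Matrix.cons_val_one, Matrix.head_cons]; exact Dvd.intro_left p rfl
  obtain ⟨c, hcc⟩ := hab
  have hx : p * (a * b) ∈ I * J := by
    rw [hs]
    refine Ideal.mem_iInf.2 fun i => Ideal.mem_iInf.2 fun j => Ideal.mem_span_singleton.2 ?_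
    fin_cases i <;> fin_cases j <;>
      simp only [Fin.mk_zero, Fin.mk_one, Matrix.cons_val_zero, Matrix.cons_val_one, Matrix.head_cons]
    · exact ⟨c, by rw [hcc]; ring⟩
    · exact ⟨a, by ring⟩
    · exact ⟨b, by ring⟩
    · exact ⟨p, by ring⟩
  obtain ⟨i, hi, j, hj, hij⟩ := hc I J hI hJ _ hx
  rw [hIdef, Ideal.mem_iInf] at hi
  rw [hJdef, Ideal.mem_iInf] at hj
  have hi0 := hi 0; have hi1 := hi 1
  have hj0 := hj 0; have hj1 := hj 1
  simp [Ideal.mem_span_singleton] at hi0 hi1 hj0 hj1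
  obtain ⟨s, hs'⟩ := hi0
  obtain ⟨t, ht⟩ := hi1
  obtain ⟨u, hu⟩ := hj0
  obtain ⟨v, hv⟩ := hj1
  have key : a * b * p = a * b * (t * v) := by
    calc a * b * p = p * (a * b) := by ring
      _ = i * j := hij
      _ = (a * t) * (b * v) := by rw [ht, hv]
      _ = a * b * (t * v) := by ring
  have hptv : p = t * v := mul_left_cancel₀ (mul_ne_zero ha0 hb0) key
  rcases hp.isUnit_or_isUnit hptv with hut | huv
  · obtain ⟨w, hw⟩ := hut
    apply hpa
    have : a = p * (s * ↑w⁻¹) := by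
      have : i * ↑w⁻¹ = a * (↑w * ↑w⁻¹) := by rw [ht, hw]; ring
      rw [w.mul_inv, mul_one] at this
      rw [← this, hs']; ring
    exact ⟨s * ↑w⁻¹, this⟩
  · obtain ⟨w, hw⟩ := huv
    apply hpb
    have : b = p * (u * ↑w⁻¹) := by
      have : j * ↑w⁻¹ = b * (↑w * ↑w⁻¹) := by rw [hv, hw]; ring
      rw [w.mul_inv, mul_one] at this
      rw [← this, hu]; ring
    exact ⟨u * ↑w⁻¹, this⟩

/-- In a condensed domain, two non-associated primes cannot lie in a common
prime ideal. -/
lemma no_common_prime {D : Type*} [CommRing D] [IsDomain D] (hc : IsCondensed D)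
    {p q : D} (hp : Prime p) (hq : Prime q) (hpq : ¬ p ∣ q)
    {P : Ideal D} (hP : P.IsPrime) (hpP : p ∈ P) (hqP : q ∈ P) : False := by
  have hqp : ¬ q ∣ p := by
    intro hd
    obtain ⟨e, he⟩ := hd
    rcases hp.irreducible.isUnit_or_isUnit he with h | h
    · exact hq.not_isUnit h
    · obtain ⟨w, hw⟩ := h
      exact hpq ⟨↑w⁻¹, by rw [he, ← hw]; simp [mul_assoc]⟩
  set I : Ideal D := Ideal.span {p, q} with hIdef
  set J : Ideal D := Ideal.span {p, q ^ 2} with hJdef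
  have hI : I ≠ ⊥ := by
    rw [Submodule.ne_bot_iff]
    exact ⟨p, Ideal.subset_span (by simp), hp.ne_zero⟩
  have hJ : J ≠ ⊥ := by
    rw [Submodule.ne_bot_iff]
    exact ⟨p, Ideal.subset_span (by simp), hp.ne_zero⟩
  have hx : p ^ 2 + q ^ 3 ∈ I * J := by
    have h1 : p * p ∈ I * J :=
      Ideal.mul_mem_mul (Ideal.subset_span (by simp)) (Ideal.subset_span (by simp))
    have h2 : q * q ^ 2 ∈ I * J :=
      Ideal.mul_mem_mul (Ideal.subset_span (by simp)) (Ideal.subset_span (by simp))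
    have := Ideal.add_mem _ h1 h2
    convert this using 1; ring
  obtain ⟨i, hi, j, hj, hij⟩ := hc I J hI hJ _ hx
  obtain ⟨α, β, hαβ⟩ := Ideal.mem_span_pair.1 hi
  obtain ⟨γ, δ, hγδ⟩ := Ideal.mem_span_pair.1 hj
  have heq : p ^ 2 + q ^ 3 = (α * p + β * q) * (γ * p + δ * q ^ 2) := by
    rw [hαβ, hγδ]; exact hij
  -- q divides 1 - α*γ
  have hq1 : q ∣ 1 - α * γ := by
    have hd : q ∣ (1 - α * γ) * p ^ 2 :=
      ⟨α * δ * p * q + β * γ * p + β * δ * q ^ 2 - q ^ 2, by linear_combination heq⟩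
    rcases hq.2.2 _ _ hd with h | h
    · exact h
    · exact absurd (hq.dvd_of_dvd_pow h) hqp
  -- p divides 1 - β*δ
  have hp1 : p ∣ 1 - β * δ := by
    have hd : p ∣ (1 - β * δ) * q ^ 3 :=
      ⟨(α * γ - 1) * p + α * δ * q ^ 2 + β * γ * q, by linear_combination heq⟩
    rcases hp.2.2 _ _ hd with h | h
    · exact h
    · exact absurd (hp.dvd_of_dvd_pow h) hpq
  obtain ⟨f, hf⟩ := hq1
  obtain ⟨e, he⟩ := hp1
  have hbg : β * γ * (p * q) = (f * p - α * δ * q + e * q ^ 2) * (p * q) := by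
    linear_combination p ^ 2 * hf + q ^ 3 * he - heq
  have hβγ : β * γ = f * p - α * δ * q + e * q ^ 2 :=
    mul_right_cancel₀ (mul_ne_zero hp.ne_zero hq.ne_zero) hbg
  have hmem : β * γ ∈ P := by
    rw [hβγ]
    exact Ideal.add_mem _ (Ideal.sub_mem _ (Ideal.mul_mem_left _ _ hpP)
      (Ideal.mul_mem_left _ _ hqP))
      (Ideal.mul_mem_left _ _ (Ideal.pow_mem_of_mem P hqP 2 (by norm_num)))
  rcases hP.mem_or_mem hmem with hβ | hγ
  · have : (1 : D) ∈ P := by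
      have : (1 : D) = β * δ + p * e := by linear_combination he
      rw [this]
      exact Ideal.add_mem _ (Ideal.mul_mem_right _ _ hβ) (Ideal.mul_mem_right _ _ hpP)
    exact hP.ne_top (Ideal.eq_top_of_isUnit_mem _ this isUnit_one)
  · have : (1 : D) ∈ P := by
      have : (1 : D) = α * γ + q * f := by linear_combination hf
      rw [this]
      exact Ideal.add_mem _ (Ideal.mul_mem_left _ _ hγ) (Ideal.mul_mem_right _ _ hqP)
    exact hP.ne_top (Ideal.eq_top_of_isUnit_mem _ this isUnit_one)

theorem stmt11 (D : Type*) [CommRing D] [IsDomain D]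
    (hat : IsAtomicDomain D) (hc : IsCondensed D) :
    IsPrincipalIdealRing D ↔ IsStarDomain D := by
  constructor
  · -- A PID is a ∗-domain
    intro hpid m n a b ha hb
    obtain ⟨d, hd⟩ := (IsPrincipalIdealRing.principal (⨅ j, Ideal.span {b j})).principal
    have hd' : (⨅ j, Ideal.span {b j}) = Ideal.span {d} := hd
    have hd0 : d ≠ 0 := by
      intro h0
      have hmem : (∏ j, b j) ∈ ⨅ j, Ideal.span {b j} :=
        Ideal.mem_iInf.2 fun j => Ideal.mem_span_singleton.2
          (Finset.dvd_prod_of_mem b (Finset.mem_univ j))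
      rw [hd', h0, Ideal.span_singleton_eq_bot.mpr rfl, Ideal.mem_bot] at hmem
      exact Finset.prod_ne_zero_iff.2 (fun j _ => hb j) hmem
    calc (⨅ i, Ideal.span {a i}) * (⨅ j, Ideal.span {b j})
        = Ideal.span {d} * (⨅ i, Ideal.span {a i}) := by rw [hd', mul_comm]
      _ = ⨅ i, Ideal.span {d} * Ideal.span {a i} := span_singleton_mul_iInf hd0 _
      _ = ⨅ i, Ideal.span {a i} * (⨅ j, Ideal.span {b j}) := by
          refine iInf_congr fun i => ?_
          rw [hd', mul_comm]
      _ = ⨅ i, ⨅ j, Ideal.span {a i * b j} := by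
          refine iInf_congr fun i => ?_
          rw [span_singleton_mul_iInf (ha i)]
          exact iInf_congr fun j => Ideal.span_singleton_mul_span_singleton _ _
  · -- A condensed atomic ∗-domain is a PID
    intro hstar
    apply IsPrincipalIdealRing.of_prime
    intro P hP
    by_cases hP0 : P = ⊥
    · exact hP0 ▸ ⟨⟨0, by rw [Ideal.submodule_span_eq]; exact (Ideal.span_singleton_eq_bot.mpr rfl).symm⟩⟩
    obtain ⟨x, hxP, hx0⟩ := Submodule.ne_bot_iff P |>.1 hP0
    have hxu : ¬ IsUnit x := fun hu => hP.ne_top (Ideal.eq_top_of_isUnit_mem _ hxP hu)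
    obtain ⟨fs, hfs, hprod⟩ := hat x hx0 hxu
    have : fs.prod ∈ P := hprod ▸ hxP
    obtain ⟨p, hpf, hpP⟩ := (hP.multiset_prod_mem_iff_exists_mem fs).1 this
    have hpirr : Irreducible p := hfs p hpf
    have hpprime : Prime p := irreducible_prime_of_star hc hstar hpirr
    refine ⟨⟨p, le_antisymm ?_ ?_⟩⟩
    · -- P ≤ span {p}
      intro y hy
      rw [Ideal.submodule_span_eq, Ideal.mem_span_singleton]
      by_contra hpy
      have hy0 : y ≠ 0 := fun h => hpy (h ▸ dvd_zero p)
      have hyu : ¬ IsUnit y := fun hu => hP.ne_top (Ideal.eq_top_of_isUnit_mem _ hy hu)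
      obtain ⟨gs, hgs, hgprod⟩ := hat y hy0 hyu
      have : gs.prod ∈ P := hgprod ▸ hy
      obtain ⟨q, hqg, hqP⟩ := (hP.multiset_prod_mem_iff_exists_mem gs).1 this
      have hqprime : Prime q := irreducible_prime_of_star hc hstar (hgs q hqg)
      have hpq : ¬ p ∣ q := by
        intro hd
        obtain ⟨e, he⟩ := id hd
        rcases (hgs q hqg).isUnit_or_isUnit he with h | h
        · exact hpirr.not_isUnit h
        · exact hpy (hd.trans (hgprod ▸ Multiset.dvd_prod hqg))
      exact no_common_prime hc hpprime hqprime hpq hP hpP hqP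
    · -- span {p} ≤ P
      rw [Ideal.submodule_span_eq, Ideal.span_le]
      simpa using hpP
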